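/- Let G be a directed mixed graph over micro-variables X whose joint distribution P_X has positive density, and suppose the pair (G, P_X) is m-Markovian. Let P be a partition of X into finite sets with coarse graph co(G,P). Then (co(G,P), P_X) is m-Markovian: for all groups Y, Z ∈ P and every S ⊆ P ∖ {Y, Z}, if Y and Z are m-separated by S in co(G,P), then Y and Z are mutually conditionally independent given T = ∪_{W∈S} W; in particular they are then also pairwise conditionally independent given T. -/

import Mathlib

/-! ## Mixed graphs -/

/-- A mixed graph: directed, bidirected and undirected edges, no self-edges. -/
structure MixedGraph (V : Type) where
  dir : V → V → Prop
  bidir : V → V → Prop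
  undir : V → V → Prop
  bidir_symm : ∀ {a b}, bidir a b → bidir b a
  undir_symm : ∀ {a b}, undir a b → undir b a
  dir_irrefl : ∀ a, ¬ dir a a
  bidir_irrefl : ∀ a, ¬ bidir a a
  undir_irrefl : ∀ a, ¬ undir a a

namespace MixedGraph

variable {V I : Type}

/-- A directed mixed graph is a mixed graph without undirected edges. -/
def IsDMG (G : MixedGraph V) : Prop := ∀ a b, ¬ G.undir a b

/-- `a` and `b` lie in the same strongly connected component: there are directed
paths between them in both directions. -/
def Strongly (G : MixedGraph V) (a b : V) : Prop :=
  Relation.ReflTransGen G.dir a b ∧ Relation.ReflTransGen G.dir b a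

lemma Strongly.refl (G : MixedGraph V) (a : V) : G.Strongly a a :=
  ⟨Relation.ReflTransGen.refl, Relation.ReflTransGen.refl⟩

lemma Strongly.symm {G : MixedGraph V} {a b : V} (h : G.Strongly a b) : G.Strongly b a :=
  ⟨h.2, h.1⟩

/-- A graph is acyclic if it has no nontrivial directed closed walk. -/
def Acyclic (G : MixedGraph V) : Prop := ∀ a, ¬ Relation.TransGen G.dir a a

end MixedGraph

/-! ## Walks -/

/-- The four ways in which an edge can occur on a walk, as traversed from its
first node `a` to its second node `b`: `fw` is `a → b`, `bw` is `a ← b`,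
`bi` is `a ↔ b` and `un` is `a − b`. -/
inductive StepKind | fw | bw | bi | un
deriving DecidableEq

/-- A step of a walk: an ordered pair of nodes together with the kind of edge. -/
structure Step (V : Type) where
  a : V
  b : V
  k : StepKind

/-- The step is an actual edge of the graph `G`. -/
def Step.ok {V : Type} (G : MixedGraph V) (s : Step V) : Prop :=
  match s.k with
  | .fw => G.dir s.a s.b
  | .bw => G.dir s.b s.a
  | .bi => G.bidir s.a s.b
  | .un => G.undir s.a s.b

/-- The edge of the step has an arrowhead at its first node. -/
def Step.headA {V : Type} (s : Step V) : Prop := s.k = .bw ∨ s.k = .bi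

/-- The edge of the step has an arrowhead at its second node. -/
def Step.headB {V : Type} (s : Step V) : Prop := s.k = .fw ∨ s.k = .bi

namespace MixedGraph

variable {V I : Type}

/-- `IsWalk G x y L`: the list of steps `L` forms a walk from `x` to `y` in `G`. -/
inductive IsWalk (G : MixedGraph V) : V → V → List (Step V) → Prop
  | nil (a : V) : IsWalk G a a []
  | cons {c : V} (s : Step V) (L : List (Step V)) (hok : s.ok G)
      (hw : IsWalk G s.b c L) : IsWalk G s.a c (s :: L)

/-- `v` is a collider at junction `i` of the walk `L`: both edges adjacent to the
inner node `v` point into `v`. -/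
def ColliderAt (L : List (Step V)) (i : ℕ) (v : V) : Prop :=
  ∃ s t, L[i]? = some s ∧ L[i+1]? = some t ∧ s.b = v ∧ t.a = v ∧ s.headB ∧ t.headA

/-- `v` is a non-collider at junction `i` of the walk `L`. -/
def NonColliderAt (L : List (Step V)) (i : ℕ) (v : V) : Prop :=
  ∃ s t, L[i]? = some s ∧ L[i+1]? = some t ∧ s.b = v ∧ t.a = v ∧ ¬ (s.headB ∧ t.headA)

/-- The walk `L` from `x` to `y` is m-blocked by the node set `S`. -/
def MBlockedWalk (G : MixedGraph V) (S : Set V) (x y : V) (L : List (Step V)) : Prop :=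
  x ∈ S ∨ y ∈ S ∨
  (∃ i v, ColliderAt L i v ∧ ∀ d, Relation.ReflTransGen G.dir v d → d ∉ S) ∨
  (∃ i v, NonColliderAt L i v ∧ v ∈ S)

/-- The walk `L` from `x` to `y` is σ-blocked by the node set `S`. -/
def SigmaBlockedWalk (G : MixedGraph V) (S : Set V) (x y : V) (L : List (Step V)) : Prop :=
  x ∈ S ∨ y ∈ S ∨
  (∃ i v, ColliderAt L i v ∧ ∀ d, Relation.ReflTransGen G.dir v d → d ∉ S) ∨
  (∃ i s t, L[i]? = some s ∧ L[i+1]? = some t ∧ s.b = t.a ∧ ¬ (s.headB ∧ t.headA) ∧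
    s.b ∈ S ∧
    (((s.k = .bw ∨ s.k = .un) ∧ ¬ G.Strongly s.b s.a) ∨
     ((t.k = .fw ∨ t.k = .un) ∧ ¬ G.Strongly t.a t.b)))

/-- `x` and `y` are m-separated by `S` in `G`. -/
def MSep (G : MixedGraph V) (S : Set V) (x y : V) : Prop :=
  ∀ L, G.IsWalk x y L → G.MBlockedWalk S x y L

/-- `x` and `y` are σ-separated by `S` in `G`. -/
def SigmaSep (G : MixedGraph V) (S : Set V) (x y : V) : Prop :=
  ∀ L, G.IsWalk x y L → G.SigmaBlockedWalk S x y L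

/-! ## Acyclification -/

/-- The acyclification of a mixed graph. -/
def acy (G : MixedGraph V) : MixedGraph V where
  dir a b := (∃ c, G.dir a c ∧ G.Strongly c b) ∧ ¬ G.Strongly a b
  bidir a b := a ≠ b ∧ (G.Strongly a b ∨
    ∃ a' b', G.Strongly a a' ∧ G.Strongly b b' ∧ G.bidir a' b')
  undir a b := ¬ G.Strongly a b ∧ G.undir a b
  bidir_symm := by
    rintro a b ⟨hab, h | ⟨a', b', ha, hb, h⟩⟩
    · exact ⟨hab.symm, Or.inl h.symm⟩
    · exact ⟨hab.symm, Or.inr ⟨b', a', hb, ha, G.bidir_symm h⟩⟩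
  undir_symm := by
    rintro a b ⟨h1, h2⟩
    exact ⟨fun h => h1 h.symm, G.undir_symm h2⟩
  dir_irrefl := fun a h => h.2 (Strongly.refl G a)
  bidir_irrefl := fun a h => h.1 rfl
  undir_irrefl := fun a h => h.1 (Strongly.refl G a)

/-! ## Coarse graphs -/

/-- The coarse (quotient) graph of `G` with respect to the partition given by the
quotient map `q` onto the set of groups `I`. -/
def coarse (G : MixedGraph V) (q : V → I) : MixedGraph I where
  dir Y Z := Y ≠ Z ∧ ∃ y z, q y = Y ∧ q z = Z ∧ G.dir y z
  bidir Y Z := Y ≠ Z ∧ ∃ y z, q y = Y ∧ q z = Z ∧ G.bidir y z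
  undir Y Z := Y ≠ Z ∧ ∃ y z, q y = Y ∧ q z = Z ∧ G.undir y z
  bidir_symm := by
    rintro Y Z ⟨hne, y, z, hy, hz, h⟩
    exact ⟨hne.symm, z, y, hz, hy, G.bidir_symm h⟩
  undir_symm := by
    rintro Y Z ⟨hne, y, z, hy, hz, h⟩
    exact ⟨hne.symm, z, y, hz, hy, G.undir_symm h⟩
  dir_irrefl := fun Y h => h.1 rfl
  bidir_irrefl := fun Y h => h.1 rfl
  undir_irrefl := fun Y h => h.1 rfl

end MixedGraph

open MeasureTheory ProbabilityTheory

/-- The σ-algebra generated by the group `A` of the random variables `X v`. -/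
def genOf {Ω V : Type} [MeasurableSpace Ω] (X : V → Ω → ℝ) (A : Set V) :
    MeasurableSpace Ω :=
  ⨆ v ∈ A, MeasurableSpace.comap (X v) inferInstance

/-- Mutual conditional independence of the groups `Y` and `Z` of random variables
given the group `W`. -/
def GroupCI {Ω V : Type} [m : MeasurableSpace Ω] [StandardBorelSpace Ω]
    (μ : Measure Ω) [IsFiniteMeasure μ] (X : V → Ω → ℝ) (Y Z W : Set V) : Prop :=
  ∃ h : genOf X W ≤ m, ProbabilityTheory.CondIndep (genOf X W) (genOf X Y) (genOf X Z) h μ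

/-- The joint distribution of the variables `X v` has a positive density. -/
def HasPositiveDensity {Ω V : Type} [MeasurableSpace Ω] [Fintype V] (μ : Measure Ω)
    (X : V → Ω → ℝ) : Prop :=
  ∃ f : (V → ℝ) → ℝ, Measurable f ∧ (∀ x, 0 < f x) ∧
    Measure.map (fun ω v => X v ω) μ = volume.withDensity fun x => ENNReal.ofReal (f x)

open MeasureTheory ProbabilityTheory MixedGraph

variable {Ω V I : Type}

/-- `(G, μ)` is σ-Markovian: σ-separation implies conditional independence. -/
def SigmaMarkov [m : MeasurableSpace Ω] [StandardBorelSpace Ω] (G : MixedGraph V)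
    (μ : Measure Ω) [IsFiniteMeasure μ] (X : V → Ω → ℝ) : Prop :=
  ∀ (a b : V) (S : Set V), G.SigmaSep S a b → GroupCI μ X {a} {b} S

/-- `(G, μ)` is σ-faithful: conditional independence implies σ-separation. -/
def SigmaFaithful [m : MeasurableSpace Ω] [StandardBorelSpace Ω] (G : MixedGraph V)
    (μ : Measure Ω) [IsFiniteMeasure μ] (X : V → Ω → ℝ) : Prop :=
  ∀ (a b : V) (S : Set V), GroupCI μ X {a} {b} S → G.SigmaSep S a b

/-- `(G, μ)` is m-Markovian: m-separation implies conditional independence. -/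
def MMarkov [m : MeasurableSpace Ω] [StandardBorelSpace Ω] (G : MixedGraph V)
    (μ : Measure Ω) [IsFiniteMeasure μ] (X : V → Ω → ℝ) : Prop :=
  ∀ (a b : V) (S : Set V), G.MSep S a b → GroupCI μ X {a} {b} S

/-- The pair of the coarse graph `G.coarse q` and the distribution is σ-faithful on
the group level: mutual conditional independence of two groups given the union of
the groups in `S` implies their σ-separation by `S` in the coarse graph. -/
def SigmaFaithfulGrp [m : MeasurableSpace Ω] [StandardBorelSpace Ω] (G : MixedGraph V)
    (q : V → I) (μ : Measure Ω) [IsFiniteMeasure μ] (X : V → Ω → ℝ) : Prop :=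
  ∀ (Y Z : I) (S : Set I),
    GroupCI μ X (q ⁻¹' {Y}) (q ⁻¹' {Z}) (q ⁻¹' S) → (G.coarse q).SigmaSep S Y Z

/-! Let `y ∈ Y`, `z ∈ Z` and let `A` be any set of nodes of the groups `Y` and `Z`. An
m-connecting walk from `y` to `z` given `q ⁻¹' S ∪ A` becomes a coarse walk from `Y` to `Z`
once the steps inside groups are dropped. Its non-colliders avoid `S`, and its colliders have
a descendant in `S ∪ {Y, Z}`: a group entered and left through arrowheads contains a micro
collider reached by a directed path, because a DMG has no undirected edges. A collider whose
descendants reach `Y` (or `Z`) but avoid `S` is removed by restarting the walk along the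
reversed directed path from `Y` (or ending it along the directed path to `Z`). The result is
an m-connecting coarse walk, contradicting coarse m-separation. So `y` and `z` are
conditionally independent given `q ⁻¹' S ∪ A` for every such `A`, and the contraction property
of conditional independence, applied once per variable of the finite groups, turns these
pairwise statements into the independence of the groups. -/

namespace Step

variable {G : MixedGraph V} {q : V → I}

lemma headA_or_headB_of_ok (hG : G.IsDMG) {s : Step V} (hs : s.ok G) : s.headA ∨ s.headB := by
  rcases s with ⟨a, b, _ | _ | _ | _⟩
  · exact Or.inr (Or.inl rfl)
  · exact Or.inl (Or.inl rfl)
  · exact Or.inl (Or.inr rfl)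
  · exact absurd hs (hG a b)

def map (q : V → I) (s : Step V) : Step I := ⟨q s.a, q s.b, s.k⟩

lemma ok_map {s : Step V} (hs : s.ok G) (hq : q s.a ≠ q s.b) : (s.map q).ok (G.coarse q) := by
  rcases s with ⟨a, b, _ | _ | _ | _⟩
  · exact ⟨hq, a, b, rfl, rfl, hs⟩
  · exact ⟨Ne.symm hq, b, a, rfl, rfl, hs⟩
  · exact ⟨hq, a, b, rfl, rfl, hs⟩
  · exact ⟨hq, a, b, rfl, rfl, hs⟩

end Step

namespace MixedGraph

variable {G : MixedGraph V}

lemma IsWalk.start_eq {a b : V} {s : Step V} {L : List (Step V)}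
    (h : G.IsWalk a b (s :: L)) : s.a = a := by
  cases h; rfl

lemma IsWalk.isChain {a b : V} {L : List (Step V)} (h : G.IsWalk a b L) :
    L.IsChain fun s t => s.b = t.a := by
  induction h with
  | nil => exact .nil
  | cons s L _ hw ih =>
    refine List.isChain_cons.mpr ⟨fun t ht => ?_, ih⟩
    obtain ⟨L', rfl⟩ : ∃ L', L = t :: L' := ⟨L.tail, List.eq_cons_of_mem_head? ht⟩
    exact hw.start_eq.symm

/-- A walk is m-connecting given `S` when all its junctions are open with `N = D = S`. -/
def OpenJunction (G : MixedGraph V) (N D : Set V) (s t : Step V) : Prop :=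
  (s.headB ∧ t.headA → ∃ d, Relation.ReflTransGen G.dir s.b d ∧ d ∈ D) ∧
  (¬ (s.headB ∧ t.headA) → s.b ∉ N)

def IsOpenWalk (G : MixedGraph V) (N D : Set V) (x y : V) (L : List (Step V)) : Prop :=
  G.IsWalk x y L ∧ L.IsChain (G.OpenJunction N D)

section OpenWalks

variable {N N' D D' : Set V}

lemma OpenJunction.mono {s t : Step V} (h : G.OpenJunction N D s t) (hN : N' ⊆ N)
    (hD : D ⊆ D') : G.OpenJunction N' D' s t :=
  ⟨fun hc => (h.1 hc).imp fun _ hd => ⟨hd.1, hD hd.2⟩, fun hc hs => h.2 hc (hN hs)⟩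

lemma OpenJunction.of_not_collider {s t : Step V} (hst : ¬ (s.headB ∧ t.headA))
    (hs : s.b ∉ N) : G.OpenJunction N D s t :=
  ⟨fun h => absurd h hst, fun _ => hs⟩

/-- Steps inside a group become loops of the coarse walk; junctions compose through them. -/
lemma OpenJunction.trans {s r t : Step V} (hr : r.b = s.b) (hhead : r.headA ∨ r.headB)
    (hsr : G.OpenJunction N D s r) (hrt : G.OpenJunction N D r t) :
    G.OpenJunction N D s t := by
  refine ⟨fun ⟨hs, ht⟩ => ?_, fun hst => ?_⟩
  · rcases hhead with hrA | hrB
    · exact hsr.1 ⟨hs, hrA⟩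
    · exact hr ▸ hrt.1 ⟨hrB, ht⟩
  · by_cases hsr' : s.headB ∧ r.headA
    · exact hr ▸ hrt.2 fun h => hst ⟨hsr'.1, h.2⟩
    · exact hsr.2 hsr'

lemma IsOpenWalk.mono {x y : V} {L : List (Step V)} (h : G.IsOpenWalk N D x y L)
    (hN : N' ⊆ N) (hD : D ⊆ D') : G.IsOpenWalk N' D' x y L :=
  ⟨h.1, h.2.imp fun _ _ hj => hj.mono hN hD⟩

lemma isChain_openJunction_of_not_mBlockedWalk {S : Set V} {x y : V} {L : List (Step V)}
    (hw : G.IsWalk x y L) (h : ¬ G.MBlockedWalk S x y L) :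
    L.IsChain (G.OpenJunction S S) := by
  refine List.isChain_iff_getElem.mpr fun i hi => ⟨fun hc => ?_, fun hc hS => ?_⟩
  · by_contra hno
    push Not at hno
    exact h <| .inr <| .inr <| .inl ⟨i, _, ⟨_, _, by simp, by simp, rfl,
      (hw.isChain.getElem i hi).symm, hc⟩, hno⟩
  · exact h <| .inr <| .inr <| .inr ⟨i, _, ⟨_, _, by simp, by simp, rfl,
      (hw.isChain.getElem i hi).symm, hc⟩, hS⟩

lemma not_isChain_openJunction_of_mBlockedWalk {S : Set V} {x y : V} {L : List (Step V)}
    (hx : x ∉ S) (hy : y ∉ S) (h : G.MBlockedWalk S x y L) :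
    ¬ L.IsChain (G.OpenJunction S S) := by
  intro hL
  have hL' {i : ℕ} {s t : Step V} (hs : L[i]? = some s) (ht : L[i + 1]? = some t) :
      G.OpenJunction S S s t := by
    obtain ⟨hi, rfl⟩ := List.getElem?_eq_some_iff.mp ht
    obtain ⟨_, rfl⟩ := List.getElem?_eq_some_iff.mp hs
    exact hL.getElem i hi
  rcases h with hx' | hy' | ⟨i, v, ⟨s, t, hs, ht, rfl, -, hc⟩, hno⟩ |
    ⟨i, v, ⟨s, t, hs, ht, rfl, -, hc⟩, hS⟩
  · exact hx hx'
  · exact hy hy'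
  · obtain ⟨d, hd, hdS⟩ := (hL' hs ht).1 hc
    exact hno d hd hdS
  · exact (hL' hs ht).2 hc hS

lemma exists_isOpenWalk_of_reflTransGen_start {v x y : V} {L : List (Step V)}
    (hvx : Relation.ReflTransGen G.dir v x) (hN : ∀ d, Relation.ReflTransGen G.dir v d → d ∉ N)
    (hL : G.IsOpenWalk N D v y L) : ∃ L', G.IsOpenWalk N D x y L' := by
  induction hvx using Relation.ReflTransGen.head_induction_on generalizing L with
  | refl => exact ⟨L, hL⟩
  | @head v w hvw _ ih =>
    refine ih (fun d hd => hN d (.head hvw hd)) (L := ⟨w, v, .bw⟩ :: L)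
      ⟨.cons (⟨w, v, .bw⟩ : Step V) L hvw hL.1, List.isChain_cons.mpr ⟨fun t _ => ?_, hL.2⟩⟩
    exact .of_not_collider (fun h => nomatch h.1) (hN v .refl)

lemma exists_isChain_cons_of_reflTransGen {s : Step V} {y : V}
    (hy : Relation.ReflTransGen G.dir s.b y)
    (hN : ∀ d, Relation.ReflTransGen G.dir s.b d → d ∉ N) :
    ∃ P, G.IsWalk s.b y P ∧ (s :: P).IsChain (G.OpenJunction N D) := by
  generalize hv : s.b = v at hy hN
  induction hy using Relation.ReflTransGen.head_induction_on generalizing s with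
  | refl => exact ⟨[], .nil _, .singleton s⟩
  | @head v w hvw _ ih =>
    obtain ⟨P, hP, hPc⟩ := ih (s := ⟨v, w, .fw⟩) rfl (fun d hd => hN d (.head hvw hd))
    refine ⟨⟨v, w, .fw⟩ :: P, hv ▸ .cons (⟨v, w, .fw⟩ : Step V) P hvw hP, .cons_cons ?_ hPc⟩
    exact .of_not_collider (fun h => nomatch h.2) (hv ▸ hN v .refl)

/-- A collider `c` whose descendants avoid `S` but reach `x` (resp. `y`) is removed by
restarting the walk with the reversed directed path `x ← ⋯ ← c` (resp. by ending it with the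
directed path `c → ⋯ → y`). -/
lemma IsOpenWalk.reroute_suffix {S : Set V} {x y a : V} {L : List (Step V)}
    (hL : G.IsOpenWalk S (S ∪ {x, y}) a y L) :
    (∃ L', G.IsOpenWalk S S x y L') ∨ ∃ L', G.IsOpenWalk S S a y L' ∧ L'.head? = L.head? := by
  obtain ⟨hw, hc⟩ := hL
  induction hw with
  | nil => exact .inr ⟨[], ⟨.nil _, .nil⟩, rfl⟩
  | cons u L hu hw ih =>
    obtain ⟨hut, hc⟩ := List.isChain_cons.mp hc
    rcases ih hc with hxy | ⟨L', ⟨hw', hc'⟩, hhead⟩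
    · exact .inl hxy
    by_cases hS : ∃ d, Relation.ReflTransGen G.dir u.b d ∧ d ∈ S
    · refine .inr ⟨u :: L', ⟨.cons u L' hu hw', List.isChain_cons.mpr ⟨fun t ht => ?_, hc'⟩⟩, rfl⟩
      exact ⟨fun _ => hS, (hut t (hhead ▸ ht)).2⟩
    push Not at hS
    by_cases hopen : ∀ t ∈ L'.head?, G.OpenJunction S S u t
    · exact .inr ⟨u :: L', ⟨.cons u L' hu hw', List.isChain_cons.mpr ⟨hopen, hc'⟩⟩, rfl⟩
    obtain ⟨t, ht, hnot⟩ : ∃ t ∈ L'.head?, ¬ G.OpenJunction S S u t := by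
      push Not at hopen; exact hopen
    have hcoll : u.headB ∧ t.headA := by
      by_contra hnc
      exact hnot (.of_not_collider hnc fun h => hS u.b .refl h)
    obtain ⟨d, hd, hdS | hdxy⟩ := (hut t (hhead ▸ ht)).1 hcoll
    · exact absurd hdS (hS d hd)
    rcases hdxy with rfl | rfl
    · exact .inl (exists_isOpenWalk_of_reflTransGen_start hd hS ⟨hw', hc'⟩)
    · obtain ⟨P, hP, hPc⟩ := exists_isChain_cons_of_reflTransGen hd hS
      exact .inr ⟨u :: P, ⟨.cons u P hu hP, hPc⟩, rfl⟩

lemma IsOpenWalk.reroute {S : Set V} {x y : V} {L : List (Step V)}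
    (hL : G.IsOpenWalk S (S ∪ {x, y}) x y L) : ∃ L', G.IsOpenWalk S S x y L' :=
  hL.reroute_suffix.elim id fun ⟨L', hL', _⟩ => ⟨L', hL'⟩

lemma MSep.not_isOpenWalk {S : Set V} {x y : V} (h : G.MSep S x y) (hx : x ∉ S) (hy : y ∉ S)
    {L : List (Step V)} : ¬ G.IsOpenWalk S (S ∪ {x, y}) x y L := fun hL =>
  let ⟨_, hw, hc⟩ := hL.reroute
  not_isChain_openJunction_of_mBlockedWalk hx hy (h _ hw) hc

end OpenWalks

section Coarsening

variable {q : V → I}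

def coarseWalk [DecidableEq I] (q : V → I) (L : List (Step V)) : List (Step I) :=
  (L.filter fun s => q s.a ≠ q s.b).map (Step.map q)

lemma reflTransGen_coarse_dir {u v : V} (h : Relation.ReflTransGen G.dir u v) :
    Relation.ReflTransGen (G.coarse q).dir (q u) (q v) := by
  refine Relation.ReflTransGen.lift' q (fun a b hab => ?_) u v h
  by_cases hq : q a = q b
  · exact (show Relation.ReflTransGen _ (q a) (q b) from hq ▸ .refl)
  · exact .single ⟨hq, a, b, rfl, rfl, hab⟩

lemma isWalk_coarseWalk [DecidableEq I] {a b : V} {L : List (Step V)} (h : G.IsWalk a b L) :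
    (G.coarse q).IsWalk (q a) (q b) (coarseWalk q L) := by
  induction h with
  | nil => exact .nil _
  | cons s L hs _ ih =>
    by_cases hq : q s.a = q s.b
    · simpa [coarseWalk, hq] using ih
    · simpa [coarseWalk, hq, Step.map] using IsWalk.cons (s.map q) _ (Step.ok_map hs hq) ih

lemma OpenJunction.map {N : Set I} {D : Set V} {s t : Step V}
    (h : G.OpenJunction (q ⁻¹' N) D s t) :
    (G.coarse q).OpenJunction N (q '' D) (s.map q) (t.map q) :=
  ⟨fun hc => (h.1 hc).elim fun d hd => ⟨q d, reflTransGen_coarse_dir hd.1, d, hd.2, rfl⟩, h.2⟩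

/-- The second conjunct is the induction invariant: it is what a step entering the group of
`a` needs to know about the first coarse step. -/
lemma isChain_coarseWalk [DecidableEq I] (hG : G.IsDMG) {N : Set I} {D : Set V}
    {a b : V} {L : List (Step V)} (hw : G.IsWalk a b L)
    (hL : L.IsChain (G.OpenJunction (q ⁻¹' N) D)) :
    (coarseWalk q L).IsChain ((G.coarse q).OpenJunction N (q '' D)) ∧
      ∀ τ ∈ (coarseWalk q L).head?, ∀ s : Step V, s.b = a →
        (s :: L).IsChain (G.OpenJunction (q ⁻¹' N) D) →
        (G.coarse q).OpenJunction N (q '' D) (s.map q) τ := by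
  induction hw with
  | nil => simp [coarseWalk]
  | cons u L hu hw ih =>
    obtain ⟨hut, hL⟩ := List.isChain_cons.mp hL
    obtain ⟨ihc, ihh⟩ := ih hL
    have hjunction : ∀ τ ∈ (coarseWalk q L).head?,
        (G.coarse q).OpenJunction N (q '' D) (u.map q) τ :=
      fun τ hτ => ihh τ hτ u rfl (List.isChain_cons.mpr ⟨hut, hL⟩)
    by_cases hq : q u.a = q u.b
    · have hcw : coarseWalk q (u :: L) = coarseWalk q L := by simp [coarseWalk, hq]
      refine hcw ▸ ⟨ihc, fun τ hτ s hs hsL => ?_⟩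
      have hsu := ((List.isChain_cons.mp hsL).1 u rfl).map (q := q)
      exact hsu.trans (r := u.map q) (by simp [Step.map, hq, hs])
        (Step.headA_or_headB_of_ok hG hu) (hjunction τ hτ)
    · have hcw : coarseWalk q (u :: L) = u.map q :: coarseWalk q L := by
        simp [coarseWalk, hq]
      refine hcw ▸ ⟨List.isChain_cons.mpr ⟨hjunction, ihc⟩, fun τ hτ s _ hsL => ?_⟩
      obtain rfl : u.map q = τ := by simpa using hτ
      exact ((List.isChain_cons.mp hsL).1 u rfl).map

lemma isOpenWalk_coarseWalk [DecidableEq I] (hG : G.IsDMG) {N : Set I} {D : Set V} {a b : V}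
    {L : List (Step V)} (h : G.IsOpenWalk (q ⁻¹' N) D a b L) :
    (G.coarse q).IsOpenWalk N (q '' D) (q a) (q b) (coarseWalk q L) :=
  ⟨isWalk_coarseWalk h.1, (isChain_coarseWalk hG h.1 h.2).1⟩

theorem mSep_preimage_union_of_coarse (hG : G.IsDMG) {S : Set I} {Y Z : I}
    (hMS : (G.coarse q).MSep S Y Z) (hY : Y ∉ S) (hZ : Z ∉ S) {y z : V} (hy : q y = Y)
    (hz : q z = Z) {A : Set V} (hA : A ⊆ q ⁻¹' {Y, Z}) : G.MSep (q ⁻¹' S ∪ A) y z := by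
  classical
  intro L hw
  by_contra hb
  have hL : G.IsOpenWalk (q ⁻¹' S) (q ⁻¹' S ∪ A) y z L :=
    IsOpenWalk.mono ⟨hw, isChain_openJunction_of_not_mBlockedWalk hw hb⟩
      Set.subset_union_left le_rfl
  have himage : q '' (q ⁻¹' S ∪ A) ⊆ S ∪ {Y, Z} := by
    rintro _ ⟨v, hv | hv, rfl⟩
    exacts [.inl hv, .inr (hA hv)]
  subst hy hz
  exact hMS.not_isOpenWalk hY hZ ((isOpenWalk_coarseWalk hG hL).mono le_rfl himage)

end Coarsening

end MixedGraph

namespace ProbabilityTheory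

variable {mΩ : MeasurableSpace Ω} {μ : Measure Ω}

lemma setIntegral_eq_of_isPiSystem {m : MeasurableSpace Ω} (hm : m ≤ mΩ) {p : Set (Set Ω)}
    (hgen : m = MeasurableSpace.generateFrom p) (hp : IsPiSystem p) {f g : Ω → ℝ}
    (hf : Integrable f μ) (hg : Integrable g μ) (huniv : ∫ x, f x ∂μ = ∫ x, g x ∂μ)
    (hbasic : ∀ s ∈ p, ∫ x in s, f x ∂μ = ∫ x in s, g x ∂μ) {s : Set Ω}
    (hs : MeasurableSet[m] s) : ∫ x in s, f x ∂μ = ∫ x in s, g x ∂μ := by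
  induction s, hs using MeasurableSpace.induction_on_inter hgen hp with
  | empty => simp
  | basic t ht => exact hbasic t ht
  | compl t ht iht =>
    have hf' := integral_add_compl (hm t ht) hf
    have hg' := integral_add_compl (hm t ht) hg
    linarith
  | iUnion t hd ht iht =>
    rw [integral_iUnion (fun i => hm _ (ht i)) hd hf.integrableOn,
      integral_iUnion (fun i => hm _ (ht i)) hd hg.integrableOn]
    exact tsum_congr iht

lemma generateFrom_image2_inter (m₁ m₂ : MeasurableSpace Ω) :
    MeasurableSpace.generateFrom
      (Set.image2 (· ∩ ·) {t | MeasurableSet[m₁] t} {t | MeasurableSet[m₂] t}) = m₁ ⊔ m₂ := by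
  refine le_antisymm (MeasurableSpace.generateFrom_le ?_) (sup_le (fun t ht => ?_) fun t ht => ?_)
  · rintro _ ⟨t, ht, v, hv, rfl⟩
    exact (le_sup_left (b := m₂) t ht).inter (le_sup_right (a := m₁) v hv)
  · exact .basic _ ⟨t, ht, Set.univ, .univ, Set.inter_univ t⟩
  · exact .basic _ ⟨Set.univ, .univ, t, ht, Set.univ_inter t⟩

lemma isPiSystem_image2_inter (m₁ m₂ : MeasurableSpace Ω) :
    IsPiSystem (Set.image2 (· ∩ ·) {t | MeasurableSet[m₁] t} {t | MeasurableSet[m₂] t}) := by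
  rintro _ ⟨t₁, ht₁, v₁, hv₁, rfl⟩ _ ⟨t₂, ht₂, v₂, hv₂, rfl⟩ _
  exact ⟨t₁ ∩ t₂, ht₁.inter ht₂, v₁ ∩ v₂, hv₁.inter hv₂, Set.inter_inter_inter_comm _ _ _ _⟩

lemma integrable_indicator_one [IsFiniteMeasure μ] {s : Set Ω} (hs : MeasurableSet s) :
    Integrable (s.indicator fun _ => (1 : ℝ)) μ :=
  (integrable_const 1).indicator hs

lemma indicator_eq_mul_indicator_one (s : Set Ω) (f : Ω → ℝ) :
    s.indicator f = f * s.indicator fun _ => 1 := by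
  ext x
  by_cases hx : x ∈ s <;> simp [hx]

variable [StandardBorelSpace Ω] [IsFiniteMeasure μ]

lemma setIntegral_condExp_indicator_inter_of_condIndep {m' m₁ m₂ : MeasurableSpace Ω}
    (hm' : m' ≤ mΩ) (hm₁ : m₁ ≤ mΩ) (hm₂ : m₂ ≤ mΩ) (h : CondIndep m' m₁ m₂ hm' μ)
    {s t v : Set Ω} (hs : MeasurableSet[m₁] s) (ht : MeasurableSet[m₂] t)
    (hv : MeasurableSet[m'] v) :
    ∫ x in t ∩ v, μ[s.indicator fun _ => 1 | m'] x ∂μ =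
      ∫ x in t ∩ v, s.indicator (fun _ => (1 : ℝ)) x ∂μ := by
  set g := μ[s.indicator fun _ => (1 : ℝ) | m']
  have hmul : Integrable (g * t.indicator fun _ => (1 : ℝ)) μ := by
    rw [← indicator_eq_mul_indicator_one]
    exact integrable_condExp.indicator (hm₂ t ht)
  calc ∫ x in t ∩ v, g x ∂μ
      = ∫ x in v, (g * t.indicator fun _ => (1 : ℝ)) x ∂μ := by
        rw [Set.inter_comm, ← setIntegral_indicator (hm₂ t ht), indicator_eq_mul_indicator_one]
    _ = ∫ x in v, (g * μ[t.indicator fun _ => (1 : ℝ) | m']) x ∂μ := by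
        rw [← setIntegral_condExp hm' hmul hv]
        exact setIntegral_congr_ae (hm' v hv) <| (condExp_mul_of_stronglyMeasurable_left
          stronglyMeasurable_condExp hmul (integrable_indicator_one (hm₂ t ht))).mono
            fun x hx _ => hx
    _ = ∫ x in v, μ[(s ∩ t).indicator fun _ => 1 | m'] x ∂μ :=
        setIntegral_congr_ae (hm' v hv) <|
          ((condIndep_iff m' m₁ m₂ hm' hm₁ hm₂ μ).mp h s t hs ht).mono fun x hx _ => hx.symm
    _ = ∫ x in t ∩ v, s.indicator (fun _ => (1 : ℝ)) x ∂μ := by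
        rw [setIntegral_condExp hm' (integrable_indicator_one ((hm₁ s hs).inter (hm₂ t ht))) hv,
          Set.inter_comm s, ← Set.indicator_indicator, setIntegral_indicator (hm₂ t ht),
          Set.inter_comm]

lemma condExp_indicator_sup_ae_eq_of_condIndep {m' m₁ m₂ : MeasurableSpace Ω}
    (hm' : m' ≤ mΩ) (hm₁ : m₁ ≤ mΩ) (hm₂ : m₂ ≤ mΩ) (h : CondIndep m' m₁ m₂ hm' μ)
    {s : Set Ω} (hs : MeasurableSet[m₁] s) :
    μ[s.indicator fun _ => (1 : ℝ) | m₂ ⊔ m'] =ᵐ[μ] μ[s.indicator fun _ => (1 : ℝ) | m'] := by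
  refine (ae_eq_condExp_of_forall_setIntegral_eq (sup_le hm₂ hm')
    (integrable_indicator_one (hm₁ s hs)) (fun _ _ _ => integrable_condExp.integrableOn)
    (fun A hA _ => ?_) ?_).symm
  · refine setIntegral_eq_of_isPiSystem (sup_le hm₂ hm') (generateFrom_image2_inter m₂ m').symm
      (isPiSystem_image2_inter m₂ m') integrable_condExp (integrable_indicator_one (hm₁ s hs))
      (integral_condExp hm') ?_ hA
    rintro _ ⟨t, ht, v, hv, rfl⟩
    exact setIntegral_condExp_indicator_inter_of_condIndep hm' hm₁ hm₂ h hs ht hv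
  · exact (stronglyMeasurable_condExp.mono le_sup_right).aestronglyMeasurable

lemma condIndep_of_condExp_indicator_sup_ae_eq {m' m₁ m₂ : MeasurableSpace Ω}
    (hm' : m' ≤ mΩ) (hm₁ : m₁ ≤ mΩ) (hm₂ : m₂ ≤ mΩ)
    (h : ∀ s, MeasurableSet[m₁] s →
      μ[s.indicator fun _ => (1 : ℝ) | m₂ ⊔ m'] =ᵐ[μ] μ[s.indicator fun _ => (1 : ℝ) | m']) :
    CondIndep m' m₁ m₂ hm' μ := by
  refine (condIndep_iff m' m₁ m₂ hm' hm₁ hm₂ μ).mpr fun s t hs ht => ?_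
  have hst : (s ∩ t).indicator (fun _ => (1 : ℝ)) =
      t.indicator (fun _ => 1) * s.indicator fun _ => 1 := by
    rw [Set.inter_comm, ← Set.indicator_indicator, indicator_eq_mul_indicator_one, mul_comm]
  have hint : Integrable (t.indicator (fun _ => (1 : ℝ)) * s.indicator fun _ => 1) μ :=
    hst ▸ integrable_indicator_one ((hm₁ s hs).inter (hm₂ t ht))
  have hint' : Integrable (μ[s.indicator fun _ => (1 : ℝ) | m'] * t.indicator fun _ => 1) μ := by
    rw [← indicator_eq_mul_indicator_one]
    exact integrable_condExp.indicator (hm₂ t ht)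
  calc μ[(s ∩ t).indicator fun _ => 1 | m']
      =ᵐ[μ] μ[μ[t.indicator (fun _ => 1) * s.indicator (fun _ => 1) | m₂ ⊔ m'] | m'] := by
        rw [hst]; exact (condExp_condExp_of_le le_sup_right (sup_le hm₂ hm')).symm
    _ =ᵐ[μ] μ[t.indicator (fun _ => 1) * μ[s.indicator (fun _ => 1) | m₂ ⊔ m'] | m'] :=
        condExp_congr_ae (condExp_mul_of_stronglyMeasurable_left
          (stronglyMeasurable_const.indicator (le_sup_left (b := m') t ht)) hint
          (integrable_indicator_one (hm₁ s hs)))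
    _ =ᵐ[μ] μ[μ[s.indicator (fun _ => 1) | m'] * t.indicator (fun _ => 1) | m'] :=
        condExp_congr_ae ((h s hs).mono fun x hx => by simp only [Pi.mul_apply, hx, mul_comm])
    _ =ᵐ[μ] μ[s.indicator fun _ => 1 | m'] * μ[t.indicator fun _ => 1 | m'] :=
        condExp_mul_of_stronglyMeasurable_left stronglyMeasurable_condExp hint'
          (integrable_indicator_one (hm₂ t ht))

lemma CondIndep.contraction {m' m₁ m₂ m₃ : MeasurableSpace Ω} {hm' : m' ≤ mΩ}
    (hm₁ : m₁ ≤ mΩ) (hm₂ : m₂ ≤ mΩ) (hm₃ : m₃ ≤ mΩ) (h₁₂ : CondIndep m' m₁ m₂ hm' μ)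
    (h₁₃ : CondIndep (m₂ ⊔ m') m₁ m₃ (sup_le hm₂ hm') μ) :
    CondIndep m' m₁ (m₂ ⊔ m₃) hm' μ := by
  refine condIndep_of_condExp_indicator_sup_ae_eq hm' hm₁ (sup_le hm₂ hm₃) fun s hs => ?_
  rw [show m₂ ⊔ m₃ ⊔ m' = m₃ ⊔ (m₂ ⊔ m') by rw [sup_comm m₂, sup_assoc]]
  exact (condExp_indicator_sup_ae_eq_of_condIndep _ hm₁ hm₃ h₁₃ hs).trans
    (condExp_indicator_sup_ae_eq_of_condIndep hm' hm₁ hm₂ h₁₂ hs)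

end ProbabilityTheory

section GroupConditionalIndependence

variable {mΩ : MeasurableSpace Ω} {X : V → Ω → ℝ}

lemma genOf_le (hX : ∀ v, Measurable (X v)) (A : Set V) : genOf X A ≤ mΩ :=
  iSup₂_le fun v _ => (hX v).comap_le

lemma genOf_union (X : V → Ω → ℝ) (A B : Set V) :
    genOf X (A ∪ B) = genOf X A ⊔ genOf X B := by
  simp only [genOf, iSup_union]

lemma genOf_empty (X : V → Ω → ℝ) : genOf X (∅ : Set V) = ⊥ := by
  simp [genOf]

lemma condIndep_genOf_of_forall_mem [StandardBorelSpace Ω] {μ : Measure Ω} [IsFiniteMeasure μ]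
    (hX : ∀ v, Measurable (X v)) {W A : Set V} (hA : A.Finite) {m : MeasurableSpace Ω}
    (hm : m ≤ mΩ)
    (h : ∀ a ∈ A, ∀ B ⊆ A, CondIndep (genOf X (W ∪ B)) m (genOf X {a}) (genOf_le hX _) μ) :
    CondIndep (genOf X W) m (genOf X A) (genOf_le hX _) μ := by
  refine Set.Finite.induction_on_subset
    (motive := fun B _ => CondIndep (genOf X W) m (genOf X B) (genOf_le hX _) μ) A hA ?_ ?_
  · simpa only [genOf_empty] using condIndep_bot_right (mΩ := mΩ) m
  · intro a B ha hBA _ ih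
    have hB := h a ha B hBA
    simp only [Set.union_comm W B, genOf_union] at hB
    rw [Set.insert_eq, Set.union_comm, genOf_union]
    exact ih.contraction hm (genOf_le hX _) (genOf_le hX _) hB

end GroupConditionalIndependence

open MeasureTheory ProbabilityTheory MixedGraph in
theorem coarse_mMarkov_general {Ω V I : Type} [MeasurableSpace Ω]
    [StandardBorelSpace Ω] (μ : Measure Ω) [IsProbabilityMeasure μ]
    (X : V → Ω → ℝ) (hX : ∀ v, Measurable (X v))
    (G : MixedGraph V) (hDMG : G.IsDMG) (hM : MMarkov G μ X)
    (q : V → I) (hfin : ∀ Y : I, (q ⁻¹' {Y}).Finite) :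
    ∀ (Y Z : I) (S : Set I), Y ∉ S → Z ∉ S → (G.coarse q).MSep S Y Z →
      GroupCI μ X (q ⁻¹' {Y}) (q ⁻¹' {Z}) (q ⁻¹' S) ∧
      ∀ y z, q y = Y → q z = Z → GroupCI μ X {y} {z} (q ⁻¹' S) := by
  intro Y Z S hYS hZS hMS
  have hsep (y z : V) (A : Set V) (hy : q y = Y) (hz : q z = Z) (hA : A ⊆ q ⁻¹' {Y, Z}) :
      CondIndep (genOf X (q ⁻¹' S ∪ A)) (genOf X {y}) (genOf X {z}) (genOf_le hX _) μ :=
    (hM y z _ (mSep_preimage_union_of_coarse hDMG hMS hYS hZS hy hz hA)).2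
  have hpair (z : V) (hz : q z = Z) (B : Set V) (hB : B ⊆ q ⁻¹' {Z}) :
      CondIndep (genOf X (q ⁻¹' S ∪ B)) (genOf X (q ⁻¹' {Y})) (genOf X {z}) (genOf_le hX _) μ :=
    .symm <| condIndep_genOf_of_forall_mem hX (hfin Y) (genOf_le hX _) fun y hy C hC => by
      rw [Set.union_assoc]
      refine (hsep y z _ hy hz fun v hv => ?_).symm
      rcases hv with hv | hv
      exacts [.inr (hB hv), .inl (hC hv)]
  refine ⟨⟨genOf_le hX _, condIndep_genOf_of_forall_mem hX (hfin Z) (genOf_le hX _) hpair⟩,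
    fun y z hy hz => ⟨genOf_le hX _, ?_⟩⟩
  simpa using hsep y z ∅ hy hz (Set.empty_subset _)

open MeasureTheory ProbabilityTheory MixedGraph in
/-- If the micro-level pair `(G, μ)` is m-Markovian and the
partition `q` has finite groups, then the pair of the coarse graph and the
distribution is m-Markovian: for groups `Y`, `Z` and every set of groups `S` with
`Y ∉ S` and `Z ∉ S`, m-separation of `Y` and `Z` by `S` in the coarse graph
implies mutual conditional independence of `Y` and `Z` given the union
`T = q ⁻¹' S`, and in particular also pairwise conditional independence given
`T`. -/
theorem coarse_mMarkov {Ω V I : Type} [MeasurableSpace Ω]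
    [StandardBorelSpace Ω] [Fintype V] (μ : Measure Ω) [IsProbabilityMeasure μ]
    (X : V → Ω → ℝ) (hX : ∀ v, Measurable (X v)) (hpos : HasPositiveDensity μ X)
    (G : MixedGraph V) (hDMG : G.IsDMG) (hM : MMarkov G μ X)
    (q : V → I) (hq : Function.Surjective q) (hfin : ∀ Y : I, (q ⁻¹' {Y}).Finite) :
    ∀ (Y Z : I) (S : Set I), Y ∉ S → Z ∉ S → (G.coarse q).MSep S Y Z →
      GroupCI μ X (q ⁻¹' {Y}) (q ⁻¹' {Z}) (q ⁻¹' S) ∧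
      ∀ y z, q y = Y → q z = Z → GroupCI μ X {y} {z} (q ⁻¹' S) :=
  coarse_mMarkov_general μ X hX G hDMG hM q hfin
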